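/- Let T be a TSS matrix on a finite connected acyclic undirected graph G = (V,E) with rank profile ρ and generators D, Inp, Trans, Out. Let x = (x_i)_{i∈V} with x_i ∈ F^{n_i} be given, and suppose the state vectors s_{(i,j)} ∈ F^{ρ(i,j)}, one for each directed edge (i,j), satisfy the state equations s_{(i,j)} = Σ_{w ∈ N(i)∖{j}} Trans^i_{j,w} · s_{(w,i)} + Inp^i_j · x_i for all directed edges (i,j), where N(i) is the set of neighbors of i. Then the vectors b_j := Σ_{i ∈ N(j)} Out^j_i · s_{(i,j)} + D^j · x_j satisfy b_j = Σ_{k ∈ V} T⟨j,k⟩ · x_k for every j ∈ V; that is, the output equations reproduce the matrix-vector product b = Tx. -/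

import Mathlib

/-!
Deleting the edge `{i, j}` of a tree splits the vertices into the side of `i` and the side of
`j`. The state `s_{(i,j)}` encodes the contribution of the inputs on the side of `i`: pushed
along any path `i − j − ⋯ − t`, it yields `Σ_{k ∈ side(i,j)} T⟨t,k⟩ x_k`. This follows by
induction on the size of the side, since the state equation splits off `Inp^i_j x_i` (the term
`k = i`) and the states of the other neighbours `w` of `i`, whose sides partition the rest of
`side(i,j)`. For `t = j` the output equation then sums the sides of all neighbours of `j`,
which together with `j` partition `V`.
-/

open Matrix

attribute [local instance] Classical.propDecidable

namespace TSS

variable {F : Type*} [Field F] {V : Type*} [Fintype V] [DecidableEq V]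

/-- The `(i,j)` block of a graph-partitioned matrix. -/
def blockOf {m n : V → ℕ} (T : Matrix ((i : V) × Fin (m i)) ((j : V) × Fin (n j)) F)
    (i j : V) : Matrix (Fin (m i)) (Fin (n j)) F :=
  fun a b => T ⟨i, a⟩ ⟨j, b⟩

/-- The submatrix `T⟨A,B⟩` of a graph-partitioned matrix. -/
def subBlock {m n : V → ℕ} (T : Matrix ((i : V) × Fin (m i)) ((j : V) × Fin (n j)) F)
    (A B : Set V) :
    Matrix {p : (i : V) × Fin (m i) // p.1 ∈ A} {q : (j : V) × Fin (n j) // q.1 ∈ B} F :=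
  T.submatrix (fun p => p.1) (fun q => q.1)

/-- The Hankel block `T⟨Ā,A⟩` induced by `A`. -/
def hankelBlock {m n : V → ℕ} (T : Matrix ((i : V) × Fin (m i)) ((j : V) × Fin (n j)) F)
    (A : Set V) :
    Matrix {p : (i : V) × Fin (m i) // p.1 ∈ Aᶜ} {q : (j : V) × Fin (n j) // q.1 ∈ A} F :=
  subBlock T Aᶜ A

/-- The number of border edges of `A`: edges of `G` with one endpoint in `A` and the other
outside of `A` (each such undirected edge is counted once, via its orientation out of `A`). -/
noncomputable def edgeCount (G : SimpleGraph V) (A : Set V) : ℕ :=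
  Nat.card {e : V × V // e.1 ∈ A ∧ e.2 ∉ A ∧ G.Adj e.1 e.2}

/-- The vertex set of the connected component containing `i` after deleting the edge `{i,j}`. -/
def side (G : SimpleGraph V) (i j : V) : Set V :=
  {v | (G.deleteEdges {s(i, j)}).Reachable i v}

/-- The unit Hankel block associated with the directed edge `(i,j)`. -/
def unitHankel (G : SimpleGraph V) {m n : V → ℕ}
    (T : Matrix ((i : V) × Fin (m i)) ((j : V) × Fin (n j)) F) (i j : V) :=
  hankelBlock T (side G i j)

/-- `outChain Out Trans k i w j` is the product
`Out^i_{p_{ν−1}} · Trans^{p_{ν−1}}_{i,p_{ν−2}} ⋯ Trans^{k}_{p₁,j}` along the walk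
`w : k = p₀ − p₁ − ⋯ − p_ν = i`, with incoming edge `(j,k)`. -/
noncomputable def outChain {G : SimpleGraph V} {m : V → ℕ} {ρ : V → V → ℕ}
    (Out : ∀ k i : V, Matrix (Fin (m k)) (Fin (ρ i k)) F)
    (Trans : ∀ k i j : V, Matrix (Fin (ρ k i)) (Fin (ρ j k)) F) :
    ∀ (k i : V), G.Walk k i → ∀ j : V, Matrix (Fin (m i)) (Fin (ρ j k)) F
  | k, _, .nil, j => Out k j
  | k, _, .cons (v := k') _ w, j => outChain Out Trans k' _ w k * Trans k k' j

/-- `pathMatrix Inp Trans Out j i w` is the product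
`Out^i_{p_{ν−1}} · Trans^{p_{ν−1}}_{i,p_{ν−2}} ⋯ Trans^{p₁}_{p₂,j} · Inp^j_{p₁}` along the
walk `w : j = p₀ − p₁ − ⋯ − p_ν = i` (and junk `0` for the empty walk). -/
noncomputable def pathMatrix {G : SimpleGraph V} {m n : V → ℕ} {ρ : V → V → ℕ}
    (Inp : ∀ k j : V, Matrix (Fin (ρ k j)) (Fin (n k)) F)
    (Trans : ∀ k i j : V, Matrix (Fin (ρ k i)) (Fin (ρ j k)) F)
    (Out : ∀ k i : V, Matrix (Fin (m k)) (Fin (ρ i k)) F) :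
    ∀ (j i : V), G.Walk j i → Matrix (Fin (m i)) (Fin (n j)) F
  | _, _, .nil => 0
  | j, i, .cons (v := p1) _ w => outChain Out Trans p1 i w j * Inp j p1

/-- A TSS representation of the graph-partitioned matrix `T` on the tree `G`, with
output dimensions `m`, input dimensions `n` and rank profile `ρ` (only the values of the
generators and of `ρ` on (pairs of adjoining) directed edges of `G` are relevant). -/
structure TSSRepr (G : SimpleGraph V) (m n : V → ℕ) (ρ : V → V → ℕ)
    (T : Matrix ((i : V) × Fin (m i)) ((j : V) × Fin (n j)) F) where
  D : ∀ k : V, Matrix (Fin (m k)) (Fin (n k)) F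
  Inp : ∀ k j : V, Matrix (Fin (ρ k j)) (Fin (n k)) F
  Trans : ∀ k i j : V, Matrix (Fin (ρ k i)) (Fin (ρ j k)) F
  Out : ∀ k i : V, Matrix (Fin (m k)) (Fin (ρ i k)) F
  diag : ∀ i : V, blockOf T i i = D i
  offdiag : ∀ {i j : V}, i ≠ j → ∀ w : G.Walk j i, w.IsPath →
      blockOf T i j = pathMatrix Inp Trans Out j i w

section Side

open SimpleGraph Walk

variable {V : Type*} {G : SimpleGraph V} {i j k v : V}

lemma self_mem_side : i ∈ side G i j := Reachable.refl i

lemma mem_side_of_walk (p : G.Walk i v) (hp : j ∉ p.support) : v ∈ side G i j := by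
  refine ⟨p.toDeleteEdges {s(i, j)} fun e he hes => hp ?_⟩
  rw [Set.mem_singleton_iff.1 hes] at he
  exact p.snd_mem_support_of_mem_edges he

lemma notMem_side (hG : G.IsAcyclic) (h : G.Adj i j) : j ∉ side G i j :=
  isAcyclic_iff_forall_adj_isBridge.1 hG h

lemma exists_isPath_of_mem_side (hG : G.IsAcyclic) (h : G.Adj i j) (hv : v ∈ side G i j) :
    ∃ p : G.Walk i v, p.IsPath ∧ j ∉ p.support := by
  obtain ⟨p⟩ := hv
  have hj : j ∉ p.support := fun hj => notMem_side hG h ⟨p.takeUntil j hj⟩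
  let q : G.Walk i v := p.map (Hom.ofLE (deleteEdges_le _))
  refine ⟨q.bypass, q.bypass_isPath, fun hb => hj ?_⟩
  simpa [q] using q.support_bypass_subset_support hb

lemma support_subset_side (p : G.Walk i v) (hp : j ∉ p.support) :
    ∀ u ∈ p.support, u ∈ side G i j := fun u hu =>
  mem_side_of_walk (p.takeUntil u hu) fun hj => hp (p.support_takeUntil_subset_support hu hj)

lemma disjoint_side_swap (hG : G.IsAcyclic) (h : G.Adj i j) :
    Disjoint (side G i j) (side G j i) := by
  refine Set.disjoint_left.2 fun v hi hj => notMem_side hG h (hi.trans ?_)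
  rw [side, Set.mem_ofPred_eq, Sym2.eq_swap] at hj
  exact hj.symm

lemma side_subset_side (hG : G.IsAcyclic) (h : G.Adj i j) (hk : G.Adj k i) (hkj : k ≠ j) :
    side G k i ⊆ side G i j := by
  intro v hv
  obtain ⟨p, -, hp⟩ := exists_isPath_of_mem_side hG hk hv
  have hj : j ∉ p.support := fun hj =>
    Set.disjoint_left.1 (disjoint_side_swap hG hk) (support_subset_side p hp j hj)
      (mem_side_of_walk (cons h nil) (by simp [hk.ne, hkj]))
  exact mem_side_of_walk (cons hk.symm p) (by simp [h.ne', hj])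

lemma eq_of_mem_side_of_mem_side (hG : G.IsAcyclic) {i₁ i₂ : V} (h₁ : G.Adj i₁ j)
    (h₂ : G.Adj i₂ j) (hv₁ : v ∈ side G i₁ j) (hv₂ : v ∈ side G i₂ j) : i₁ = i₂ := by
  obtain ⟨p₁, hp₁, hj₁⟩ := exists_isPath_of_mem_side hG h₁ hv₁
  obtain ⟨p₂, hp₂, hj₂⟩ := exists_isPath_of_mem_side hG h₂ hv₂
  have := (hG.subsingleton_path j v).elim ⟨cons h₁.symm p₁, hp₁.cons hj₁⟩
    ⟨cons h₂.symm p₂, hp₂.cons hj₂⟩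
  simpa using congrArg (fun p : G.Path j v => p.1.snd) this

lemma exists_adj_mem_side_of_mem_side (hG : G.IsAcyclic) (h : G.Adj i j) (hv : v ∈ side G i j)
    (hvi : v ≠ i) : ∃ k, G.Adj k i ∧ k ≠ j ∧ v ∈ side G k i := by
  obtain ⟨p, hp, hj⟩ := exists_isPath_of_mem_side hG h hv
  cases p with
  | nil => exact absurd rfl hvi
  | cons hk q =>
    refine ⟨_, hk.symm, ?_, mem_side_of_walk q ((cons_isPath_iff _ _).1 hp).2⟩
    rintro rfl
    exact hj (by simp)

lemma exists_adj_mem_side (hG : G.Connected) (hv : v ≠ j) :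
    ∃ i, G.Adj i j ∧ v ∈ side G i j := by
  obtain ⟨p, hp⟩ := (hG.preconnected j v).exists_isPath
  cases p with
  | nil => exact absurd rfl hv
  | cons h q => exact ⟨_, h.symm, mem_side_of_walk q ((cons_isPath_iff _ _).1 hp).2⟩

lemma _root_.SimpleGraph.IsAcyclic.isPath_cons_cons (hG : G.IsAcyclic) {t : V} (h : G.Adj i j)
    (hk : G.Adj k i) (hkj : k ≠ j) {w : G.Walk j t} (hw : (cons h w).IsPath) :
    (cons hk (cons h w)).IsPath := by
  rw [hG.isPath_iff_isChain, edges_cons] at hw ⊢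
  rw [edges_cons, List.isChain_cons_cons]
  exact ⟨by simp [hkj, hk.ne], hw⟩

end Side

section SideFinset

open SimpleGraph

variable {V : Type*} [Fintype V] {G : SimpleGraph V} {i j k : V}

noncomputable def sideFinset (G : SimpleGraph V) (i j : V) : Finset V := {v | v ∈ side G i j}

@[simp]
lemma mem_sideFinset {v : V} : v ∈ sideFinset G i j ↔ v ∈ side G i j := by
  simp [sideFinset]

lemma card_sideFinset_lt (hG : G.IsAcyclic) (h : G.Adj i j) (hk : G.Adj k i) (hkj : k ≠ j) :
    (sideFinset G k i).card < (sideFinset G i j).card := by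
  refine Finset.card_lt_card ((Finset.ssubset_iff_of_subset fun v hv => ?_).2 ⟨i, ?_, ?_⟩)
  · simpa using side_subset_side hG h hk hkj (mem_sideFinset.1 hv)
  · simpa using self_mem_side
  · simpa using notMem_side hG hk

variable {M : Type*} [AddCommMonoid M]

lemma sum_insert_biUnion_sideFinset (hG : G.IsAcyclic) {S : Finset V} (hS : ∀ k ∈ S, G.Adj k i)
    (f : V → M) :
    ∑ v ∈ insert i (S.biUnion (sideFinset G · i)), f v
      = f i + ∑ k ∈ S, ∑ v ∈ sideFinset G k i, f v := by
  rw [Finset.sum_insert, Finset.sum_biUnion]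
  · intro a ha b hb hab
    exact Finset.disjoint_left.2 fun v hva hvb => hab <| eq_of_mem_side_of_mem_side hG
      (hS a ha) (hS b hb) (mem_sideFinset.1 hva) (mem_sideFinset.1 hvb)
  · simp only [Finset.mem_biUnion, mem_sideFinset, not_exists, not_and]
    exact fun k hk => notMem_side hG (hS k hk)

lemma sum_sideFinset [DecidablePred fun k => G.Adj k i ∧ k ≠ j] (hG : G.IsAcyclic)
    (h : G.Adj i j) (f : V → M) :
    ∑ v ∈ sideFinset G i j, f v
      = f i + ∑ k ∈ Finset.univ.filter (fun k => G.Adj k i ∧ k ≠ j),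
          ∑ v ∈ sideFinset G k i, f v := by
  rw [← sum_insert_biUnion_sideFinset hG (by simp +contextual)]
  congr 1
  ext v
  simp only [mem_sideFinset, Finset.mem_insert, Finset.mem_biUnion, Finset.mem_filter,
    Finset.mem_univ, true_and]
  constructor
  · intro hv
    by_cases hvi : v = i
    · exact .inl hvi
    · obtain ⟨k, hk, hkj, hvk⟩ := exists_adj_mem_side_of_mem_side hG h hv hvi
      exact .inr ⟨k, ⟨hk, hkj⟩, hvk⟩
  · rintro (rfl | ⟨k, ⟨hk, hkj⟩, hvk⟩)
    · exact self_mem_side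
    · exact side_subset_side hG h hk hkj hvk

lemma sum_univ_eq_add_sum_sideFinset (hG : G.IsTree) (j : V) [DecidablePred (G.Adj · j)]
    (f : V → M) :
    ∑ v, f v
      = f j + ∑ i ∈ Finset.univ.filter (fun i => G.Adj i j), ∑ v ∈ sideFinset G i j, f v := by
  rw [← sum_insert_biUnion_sideFinset hG.isAcyclic (by simp)]
  congr 1
  ext v
  simp only [Finset.mem_univ, Finset.mem_insert, Finset.mem_biUnion, Finset.mem_filter,
    true_and, mem_sideFinset, true_iff]
  by_cases hvj : v = j
  · exact .inl hvj
  · exact .inr (exists_adj_mem_side hG.connected hvj)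

end SideFinset

section StateEquations

open SimpleGraph Walk

variable {G : SimpleGraph V} {m n : V → ℕ} {ρ : V → V → ℕ}
  {T : Matrix ((i : V) × Fin (m i)) ((j : V) × Fin (n j)) F}

def SatisfiesStateEquations (R : TSSRepr G m n ρ T) (x : ∀ i : V, Fin (n i) → F)
    (s : ∀ i j : V, Fin (ρ i j) → F) : Prop :=
  ∀ i j : V, G.Adj i j →
    s i j = (∑ w ∈ Finset.univ.filter (fun w => G.Adj w i ∧ w ≠ j), R.Trans i j w *ᵥ s w i)
      + R.Inp i j *ᵥ x i

theorem outChain_mulVec_eq_sum_sideFinset (hG : G.IsAcyclic) (R : TSSRepr G m n ρ T)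
    {x : ∀ i : V, Fin (n i) → F} {s : ∀ i j : V, Fin (ρ i j) → F}
    (hs : SatisfiesStateEquations R x s) {i j t : V} (h : G.Adj i j) (w : G.Walk j t)
    (hw : (cons h w).IsPath) :
    outChain R.Out R.Trans j t w i *ᵥ s i j = ∑ k ∈ sideFinset G i j, blockOf T t k *ᵥ x k := by
  induction hN : (sideFinset G i j).card using Nat.strong_induction_on generalizing i j t w with
  | _ N ih =>
  have hti : t ≠ i := fun hti => ((cons_isPath_iff _ _).1 hw).2 (hti ▸ w.end_mem_support)
  rw [hs i j h, mulVec_add, mulVec_sum, sum_sideFinset hG h, add_comm, mulVec_mulVec]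
  congr 1
  · -- `pathMatrix` of `cons h w` unfolds to `outChain … w i * Inp i j`
    exact congrArg (· *ᵥ x i) (R.offdiag hti (cons h w) hw).symm
  · refine Finset.sum_congr rfl fun k hk => ?_
    obtain ⟨hk, hkj⟩ := (Finset.mem_filter.1 hk).2
    rw [mulVec_mulVec]
    exact ih _ (hN ▸ card_sideFinset_lt hG h hk hkj) hk (cons h w)
      (hG.isPath_cons_cons h hk hkj hw) rfl

end StateEquations

/-- given a TSS representation of `T` on the tree `G`, an input `x` and
states `s_{(i,j)}` satisfying the state equations
`s_{(i,j)} = Σ_{w ∈ N(i)∖{j}} Trans^i_{j,w} s_{(w,i)} + Inp^i_j x_i` on every directed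
edge `(i,j)`, the output equations
`b_j = Σ_{i ∈ N(j)} Out^j_i s_{(i,j)} + D^j x_j` reproduce the matrix-vector product:
`b_j = Σ_{k ∈ V} T⟨j,k⟩ x_k`. -/
theorem tss_matvec {F : Type*} [Field F] {V : Type*} [Fintype V] [DecidableEq V]
    (G : SimpleGraph V) (hG : G.IsTree) (m n : V → ℕ) (ρ : V → V → ℕ)
    (T : Matrix ((i : V) × Fin (m i)) ((j : V) × Fin (n j)) F)
    (R : TSSRepr G m n ρ T)
    (x : ∀ i : V, Fin (n i) → F) (s : ∀ i j : V, Fin (ρ i j) → F)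
    (hs : ∀ i j : V, G.Adj i j →
      s i j = (∑ w ∈ Finset.univ.filter (fun w => G.Adj w i ∧ w ≠ j),
          (R.Trans i j w).mulVec (s w i)) + (R.Inp i j).mulVec (x i)) :
    ∀ j : V,
      (∑ i ∈ Finset.univ.filter (fun i => G.Adj i j), (R.Out j i).mulVec (s i j))
          + (R.D j).mulVec (x j)
        = ∑ k : V, (blockOf T j k).mulVec (x k) := by
  intro j
  have hOut : ∀ i ∈ Finset.univ.filter (fun i => G.Adj i j),
      R.Out j i *ᵥ s i j = ∑ k ∈ sideFinset G i j, blockOf T j k *ᵥ x k := fun i hi =>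
    have hij : G.Adj i j := (Finset.mem_filter.1 hi).2
    outChain_mulVec_eq_sum_sideFinset hG.isAcyclic R hs hij .nil
      (SimpleGraph.Path.singleton hij).isPath
  rw [Finset.sum_congr rfl hOut, ← R.diag j, sum_univ_eq_add_sum_sideFinset hG j, add_comm]

end TSS
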